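/- Fix B > 0, σ² > 0, channel gains a₁, a₂ with 0 < a₁ ≤ a₂ (user 1 has the worse channel), and rates r₁ > 0, r₂ > 0, and let S = {(p₁, p₂) ∈ ℝ² : p₁ ≥ 0, p₂ ≥ 0, σ²·(2^{r₁/B} − 1) ≤ a₁·p₁, σ²·(2^{r₂/B} − 1) ≤ a₂·p₂, σ²·(2^{(r₁+r₂)/B} − 1) ≤ a₁·p₁ + a₂·p₂}. Define p₁* = σ²·(2^{r₁/B} − 1)/a₁ and p₂* = σ²·(2^{(r₁+r₂)/B} − 2^{r₁/B})/a₂. Then (p₁*, p₂*) ∈ S and p₁* + p₂* ≤ p₁ + p₂ for every (p₁, p₂) ∈ S. That is, minimum sum power is achieved by decoding the better-channel user first (with interference) and the worse-channel user last at its interference-free single-user power. -/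

import Mathlib

/-!
Write the constraints as `c₁ ≤ a₁ p₁`, `c₂ ≤ a₂ p₂`, `c₁₂ ≤ a₁ p₁ + a₂ p₂`. The corner
`(c₁ / a₁, (c₁₂ - c₁) / a₂)` makes the first and the sum constraint tight; it satisfies the second
because `2^{s+t} - 2^s = 2^s (2^t - 1) ≥ 2^t - 1`. For a feasible point, `d := p₁ - c₁ / a₁ ≥ 0`
and the sum constraint gives `a₂ p₂ ≥ c₁₂ - c₁ - a₁ d ≥ c₁₂ - c₁ - a₂ d` since `a₁ ≤ a₂`, i.e.
`p₁ + p₂` is at least the corner's sum.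
-/

def macPowerRegion (a₁ a₂ c₁ c₂ c₁₂ : ℝ) : Set (ℝ × ℝ) :=
  {q | 0 ≤ q.1 ∧ 0 ≤ q.2 ∧ c₁ ≤ a₁ * q.1 ∧ c₂ ≤ a₂ * q.2 ∧ c₁₂ ≤ a₁ * q.1 + a₂ * q.2}

theorem macPowerRegion_corner_mem {a₁ a₂ c₁ c₂ c₁₂ : ℝ} (ha₁ : 0 < a₁) (ha₂ : 0 < a₂)
    (hc₁ : 0 ≤ c₁) (hc₂ : 0 ≤ c₂) (hgap : c₂ ≤ c₁₂ - c₁) :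
    (c₁ / a₁, (c₁₂ - c₁) / a₂) ∈ macPowerRegion a₁ a₂ c₁ c₂ c₁₂ := by
  have h₁ : a₁ * (c₁ / a₁) = c₁ := mul_div_cancel₀ _ ha₁.ne'
  have h₂ : a₂ * ((c₁₂ - c₁) / a₂) = c₁₂ - c₁ := mul_div_cancel₀ _ ha₂.ne'
  refine ⟨div_nonneg hc₁ ha₁.le, div_nonneg (hc₂.trans hgap) ha₂.le, h₁.ge,
    hgap.trans_eq h₂.symm, ?_⟩
  simp only [h₁, h₂, add_sub_cancel, le_refl]

theorem macPowerRegion_corner_add_le {a₁ a₂ c₁ c₂ c₁₂ : ℝ} (ha₁ : 0 < a₁) (ha : a₁ ≤ a₂)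
    {q : ℝ × ℝ} (hq : q ∈ macPowerRegion a₁ a₂ c₁ c₂ c₁₂) :
    c₁ / a₁ + (c₁₂ - c₁) / a₂ ≤ q.1 + q.2 := by
  obtain ⟨-, -, hc₁, -, hc₁₂⟩ := hq
  have hd : 0 ≤ q.1 - c₁ / a₁ := sub_nonneg.2 ((div_le_iff₀' ha₁).2 hc₁)
  have hsum : c₁₂ - c₁ ≤ a₂ * (q.1 - c₁ / a₁ + q.2) := calc
    c₁₂ - c₁ ≤ a₁ * (q.1 - c₁ / a₁) + a₂ * q.2 := by
      rw [mul_sub, mul_div_cancel₀ _ ha₁.ne']; linarith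
    _ ≤ a₂ * (q.1 - c₁ / a₁) + a₂ * q.2 := by gcongr
    _ = a₂ * (q.1 - c₁ / a₁ + q.2) := by ring
  linarith [(div_le_iff₀' (ha₁.trans_le ha)).2 hsum]

theorem sub_one_le_two_rpow_add_sub_two_rpow {s t : ℝ} (hs : 0 ≤ s) (ht : 0 ≤ t) :
    (2:ℝ) ^ t - 1 ≤ (2:ℝ) ^ (s + t) - (2:ℝ) ^ s := by
  rw [Real.rpow_add two_pos, ← mul_sub_one]
  exact le_mul_of_one_le_left (sub_nonneg.2 (Real.one_le_rpow one_le_two ht))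
    (Real.one_le_rpow one_le_two hs)

/-- With `0 < a₁ ≤ a₂` (user 1 has the worse channel), the power pair
`p₁* = σ²(2^{r₁/B} − 1)/a₁`, `p₂* = σ²(2^{(r₁+r₂)/B} − 2^{r₁/B})/a₂` is feasible and
minimizes the sum power: decode the better-channel user first, the worse one last. -/
theorem stmt_14 (B σ2 a₁ a₂ r₁ r₂ : ℝ) (hB : 0 < B) (hσ : 0 < σ2)
    (ha₁ : 0 < a₁) (ha : a₁ ≤ a₂) (hr₁ : 0 < r₁) (hr₂ : 0 < r₂)
    (S : Set (ℝ × ℝ))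
    (hS : S = {q : ℝ × ℝ | 0 ≤ q.1 ∧ 0 ≤ q.2 ∧
      σ2 * ((2:ℝ) ^ (r₁ / B) - 1) ≤ a₁ * q.1 ∧
      σ2 * ((2:ℝ) ^ (r₂ / B) - 1) ≤ a₂ * q.2 ∧
      σ2 * ((2:ℝ) ^ ((r₁ + r₂) / B) - 1) ≤ a₁ * q.1 + a₂ * q.2})
    (p₁star p₂star : ℝ)
    (hp₁ : p₁star = σ2 * ((2:ℝ) ^ (r₁ / B) - 1) / a₁)
    (hp₂ : p₂star = σ2 * ((2:ℝ) ^ ((r₁ + r₂) / B) - (2:ℝ) ^ (r₁ / B)) / a₂) :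
    (p₁star, p₂star) ∈ S ∧ ∀ q ∈ S, p₁star + p₂star ≤ q.1 + q.2 := by
  have hs : 0 ≤ r₁ / B := div_nonneg hr₁.le hB.le
  have ht : 0 ≤ r₂ / B := div_nonneg hr₂.le hB.le
  have hp₂' : p₂star =
      (σ2 * ((2:ℝ) ^ ((r₁ + r₂) / B) - 1) - σ2 * ((2:ℝ) ^ (r₁ / B) - 1)) / a₂ := by
    rw [hp₂]; ring
  have hgap : σ2 * ((2:ℝ) ^ (r₂ / B) - 1) ≤
      σ2 * ((2:ℝ) ^ ((r₁ + r₂) / B) - 1) - σ2 * ((2:ℝ) ^ (r₁ / B) - 1) := by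
    rw [← mul_sub, sub_sub_sub_cancel_right, add_div]
    exact mul_le_mul_of_nonneg_left (sub_one_le_two_rpow_add_sub_two_rpow hs ht) hσ.le
  have hsub_one_nonneg {u : ℝ} (hu : 0 ≤ u) : 0 ≤ σ2 * ((2:ℝ) ^ u - 1) :=
    mul_nonneg hσ.le (sub_nonneg.2 (Real.one_le_rpow one_le_two hu))
  subst hS hp₁ hp₂'
  exact ⟨macPowerRegion_corner_mem ha₁ (ha₁.trans_le ha) (hsub_one_nonneg hs)
      (hsub_one_nonneg ht) hgap,
    fun q hq => macPowerRegion_corner_add_le ha₁ ha hq⟩
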